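/- Let G be a finite group of order n ≥ 2, A a finite set of size q ≥ 2, and H a subgroup of G. Let μ be the Möbius function of the lattice of subgroups of G. Then |B_{[H]}| = c_H · Σ_{K ≤ G} μ(H,K) · q^{[G:K]}, where the sum runs over all subgroups K of G, [G:K] is the index of K in G, and c_H is the number of subgroups of G conjugate to H. -/

import Mathlib

/-! Sort the configurations by their stabilizer and let `f L` count those with stabilizer
exactly `L`. A configuration is fixed by `K` iff it is constant on the cosets `hK`, so
`∑_{L ≥ K} f L = q^[G:K]`, and Möbius inversion on the subgroup lattice gives
`f H = ∑_K μ(H,K) q^[G:K]`. Shifting by `g` conjugates stabilizers, so `f` is constant on the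
conjugacy class of `H`, which has `c_H` members. -/

variable {G A : Type*}

/-- The right shift action of `G` on configurations `A^G`: `(x · g) h = x (h * g⁻¹)`. -/
def shift [Group G] (x : G → A) (g : G) : G → A := fun h => x (h * g⁻¹)

/-- A transformation of the configuration space is `G`-equivariant if it commutes
with the shift action. -/
def equivariant [Group G] (τ : (G → A) → (G → A)) : Prop :=
  ∀ (x : G → A) (g : G), τ (shift x g) = shift (τ x) g

/-- The `G`-orbit of a configuration. -/
def orbit [Group G] (x : G → A) : Set (G → A) := Set.range (shift x)

/-- The stabilizer of a configuration, as a subgroup of `G`. -/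
def stab [Group G] (x : G → A) : Subgroup G where
  carrier := {g : G | shift x g = x}
  one_mem' := by
    show shift x 1 = x
    funext h
    simp [shift]
  mul_mem' := by
    intro a b ha hb
    have ha' : shift x a = x := ha
    have hb' : shift x b = x := hb
    show shift x (a * b) = x
    funext h
    show x (h * (a * b)⁻¹) = x h
    have key : h * (a * b)⁻¹ = h * b⁻¹ * a⁻¹ := by group
    rw [key]
    have h1 := congrFun ha' (h * b⁻¹)
    have h2 := congrFun hb' h
    simp only [shift] at h1 h2
    rw [h1, h2]
  inv_mem' := by
    intro a ha
    have ha' : shift x a = x := ha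
    show shift x a⁻¹ = x
    funext h
    show x (h * a⁻¹⁻¹) = x h
    rw [inv_inv]
    have h1 := congrFun ha' (h * a)
    simp only [shift] at h1
    rw [mul_inv_cancel_right] at h1
    exact h1.symm

/-- Two subgroups `H`, `K` of `G` are conjugate, namely `K = g⁻¹ * H * g` for some `g ∈ G`. -/
def conjSub [Group G] (H K : Subgroup G) : Prop :=
  ∃ g : G, ∀ a : G, a ∈ K ↔ g * a * g⁻¹ ∈ H

section Moebius

open scoped Classical

variable {α : Type*} [PartialOrder α] [Fintype α] {μ : α → α → ℤ} {H : α}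

theorem sum_moebius_le_eq_ite (hμ_self : μ H H = 1) (hμ_nle : ∀ K, ¬ H ≤ K → μ H K = 0)
    (hμ_sum : ∀ K, H < K → ∑ᶠ L ∈ {L | H ≤ L ∧ L ≤ K}, μ H L = 0) (L : α) :
    ∑ K with K ≤ L, μ H K = if L = H then 1 else 0 := by
  have hfin : ∑ K with K ≤ L, μ H K = ∑ᶠ K ∈ {K | H ≤ K ∧ K ≤ L}, μ H K := by
    rw [← Finset.sum_filter_of_ne (p := fun K => H ≤ K)
      (fun K _ h => not_imp_comm.1 (hμ_nle K) h), Finset.filter_filter,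
      ← finsum_mem_coe_finset]
    congr 1
    ext K
    simp [and_comm]
  rw [hfin]
  split_ifs with hLH
  · subst hLH
    have : {K | L ≤ K ∧ K ≤ L} = {L} := by ext K; simp [le_antisymm_iff, and_comm]
    rw [this, finsum_mem_singleton, hμ_self]
  · by_cases hHL : H ≤ L
    · exact hμ_sum L (lt_of_le_of_ne hHL (Ne.symm hLH))
    · have : {K | H ≤ K ∧ K ≤ L} = ∅ := by
        ext K; simpa using fun hHK hKL => hHL (hHK.trans hKL)
      rw [this, finsum_mem_empty]

theorem sum_moebius_mul_sum_ge (hμ_self : μ H H = 1) (hμ_nle : ∀ K, ¬ H ≤ K → μ H K = 0)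
    (hμ_sum : ∀ K, H < K → ∑ᶠ L ∈ {L | H ≤ L ∧ L ≤ K}, μ H L = 0) (f : α → ℤ) :
    ∑ K, μ H K * ∑ L with K ≤ L, f L = f H := by
  calc ∑ K, μ H K * ∑ L with K ≤ L, f L
      = ∑ L, (∑ K with K ≤ L, μ H K) * f L := by
        simp only [Finset.mul_sum, Finset.sum_mul]
        exact Finset.sum_comm' (by simp)
    _ = f H := by simp [sum_moebius_le_eq_ite hμ_self hμ_nle hμ_sum]

end Moebius

theorem Nat.card_subtype_comp_eq_sum {X β : Type*} [Fintype X] [Fintype β] (s : X → β)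
    (P : β → Prop) [DecidablePred P] :
    Nat.card {x // P (s x)} = ∑ b with P b, Nat.card {x // s x = b} := by
  rw [← Nat.card_congr (Equiv.sigmaSubtypeFiberEquivSubtype s fun _ => Iff.rfl), Nat.card_sigma]
  exact (Finset.sum_subtype (Finset.univ.filter P) (by simp)
    fun b => Nat.card {x // s x = b}).symm

section Configurations

variable [Group G]

theorem shift_shift (x : G → A) (g g' : G) : shift (shift x g) g' = shift x (g * g') := by
  funext h
  simp [shift, mul_assoc]

theorem shift_one (x : G → A) : shift x 1 = x := by
  funext h
  simp [shift]

variable (A) in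
def shiftEquiv (g : G) : (G → A) ≃ (G → A) where
  toFun x := shift x g
  invFun x := shift x g⁻¹
  left_inv x := by simp [shift_shift, shift_one]
  right_inv x := by simp [shift_shift, shift_one]

theorem stab_shift (x : G → A) (g : G) :
    stab (shift x g) = (stab x).comap (MulAut.conj g).toMonoidHom := by
  ext s
  change shift (shift x g) s = shift x g ↔ shift x (g * s * g⁻¹) = x
  rw [← (shiftEquiv A g⁻¹).apply_eq_iff_eq]
  simp [shiftEquiv, shift_shift, shift_one, mul_assoc]

theorem conjSub_iff_eq_comap {H K : Subgroup G} :
    conjSub K H ↔ ∃ g : G, H = K.comap (MulAut.conj g).toMonoidHom := by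
  simp [conjSub, SetLike.ext_iff]

theorem card_stab_eq_of_conjSub {H K : Subgroup G} (hKH : conjSub K H) :
    Nat.card {x : G → A // stab x = K} = Nat.card {x : G → A // stab x = H} := by
  obtain ⟨g, rfl⟩ := conjSub_iff_eq_comap.1 hKH
  refine Nat.card_congr ((shiftEquiv A g).subtypeEquiv fun x => ?_)
  rw [shiftEquiv, Equiv.coe_fn_mk, stab_shift]
  exact (Subgroup.comap_injective (MulAut.conj g).surjective).eq_iff.symm

def leStabEquivQuotient (K : Subgroup G) : {x : G → A // K ≤ stab x} ≃ (G ⧸ K → A) where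
  toFun x := Quotient.lift x.1 fun a b hab => by
    have h := congrFun (x.2 (QuotientGroup.leftRel_apply.mp hab)) b
    simpa [shift] using h
  invFun y := ⟨y ∘ QuotientGroup.mk, fun k hk => funext fun h =>
    congrArg y (QuotientGroup.mk_mul_of_mem h (inv_mem hk))⟩
  left_inv x := rfl
  right_inv y := funext fun q => Quotient.inductionOn q fun _ => rfl

theorem card_le_stab_eq_pow_index (K : Subgroup G) [K.FiniteIndex] :
    Nat.card {x : G → A // K ≤ stab x} = Nat.card A ^ K.index := by
  rw [Nat.card_congr (leStabEquivQuotient K), Nat.card_fun, Subgroup.index]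

end Configurations

theorem card_B_eq_moebius_sum_general [Group G] [Fintype G] [Fintype A]
    (μ : Subgroup G → Subgroup G → ℤ)
    (hμ_self : ∀ H : Subgroup G, μ H H = 1)
    (hμ_nle : ∀ H K : Subgroup G, ¬ H ≤ K → μ H K = 0)
    (hμ_sum : ∀ H K : Subgroup G, H < K →
      ∑ᶠ L ∈ {L : Subgroup G | H ≤ L ∧ L ≤ K}, μ H L = 0)
    (H : Subgroup G) :
    (Nat.card {x : G → A // conjSub (stab x) H} : ℤ) =
      (Nat.card {K : Subgroup G // conjSub K H} : ℤ) *
        ∑ᶠ K : Subgroup G, μ H K * (Fintype.card A : ℤ) ^ K.index := by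
  classical
  have : Fintype (Subgroup G) := Fintype.ofFinite _
  set N : Subgroup G → ℕ := fun K => Nat.card {x : G → A // stab x = K}
  have hfixed (K : Subgroup G) :
      (Fintype.card A : ℤ) ^ K.index = ∑ L with K ≤ L, (N L : ℤ) := by
    rw [← Nat.card_eq_fintype_card, ← Nat.cast_pow, ← card_le_stab_eq_pow_index,
      Nat.card_subtype_comp_eq_sum, Nat.cast_sum]
  have hclass : Nat.card {x : G → A // conjSub (stab x) H} =
      Nat.card {K : Subgroup G // conjSub K H} * N H := by
    rw [Nat.card_subtype_comp_eq_sum stab (conjSub · H),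
      Finset.sum_congr rfl fun K hK => card_stab_eq_of_conjSub (Finset.mem_filter.1 hK).2,
      Finset.sum_const, smul_eq_mul, ← Fintype.card_subtype, ← Nat.card_eq_fintype_card]
  rw [finsum_eq_sum_of_fintype]
  simp_rw [hfixed]
  rw [sum_moebius_mul_sum_ge (hμ_self H) (hμ_nle H) (hμ_sum H), hclass, Nat.cast_mul]

/-- with `μ` the Möbius function of the subgroup lattice of `G`,
`|B_{[H]}| = c_H · Σ_{K ≤ G} μ(H,K) · q^{[G:K]}`, where `c_H` is the number of
subgroups of `G` conjugate to `H`. -/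
theorem card_B_eq_moebius_sum [Group G] [Fintype G] [Fintype A]
    (hn : 2 ≤ Fintype.card G) (hq : 2 ≤ Fintype.card A)
    (μ : Subgroup G → Subgroup G → ℤ)
    (hμ_self : ∀ H : Subgroup G, μ H H = 1)
    (hμ_nle : ∀ H K : Subgroup G, ¬ H ≤ K → μ H K = 0)
    (hμ_sum : ∀ H K : Subgroup G, H < K →
      ∑ᶠ L ∈ {L : Subgroup G | H ≤ L ∧ L ≤ K}, μ H L = 0)
    (H : Subgroup G) :
    (Nat.card {x : G → A // conjSub (stab x) H} : ℤ) =
      (Nat.card {K : Subgroup G // conjSub K H} : ℤ) *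
        ∑ᶠ K : Subgroup G, μ H K * (Fintype.card A : ℤ) ^ K.index :=
  card_B_eq_moebius_sum_general μ hμ_self hμ_nle hμ_sum H
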